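/- arXiv:2108.11867 — 4 statements merged into one kernel-verified Lean document; each statement's English description precedes it below -/
import Mathlib

section
/- Blockchain transitions respect the operation lifecycle: if [P, M, C, t] ⇒ [P', M', C', t'] and oph is in the domain of P with P(oph) = (op, t̂, s), then either (a) P'(oph) = P(oph); or (b) s = pending and P'(oph) = (op, t̂, timeout); or (c) s = pending, t − t̂ ≤ 60, P'(oph) = (op, t̂, included t), and t' = t + 1. -/
set_option autoImplicit false

/-! ## Basic domains of the execution model -/

abbrev Puk := ℕ   -- public keys
abbrev Pak := ℕ   -- private keys
abbrev Puh := ℕ   -- public hashes of contracts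
abbrev Oph := ℕ   -- operation hashes
abbrev Tz := ℕ    -- token amounts
abbrev Time := ℕ  -- time stamps
abbrev Code := ℕ  -- contract scripts (treated as black boxes)

/-- Status of an operation in the pool. -/
inductive Status where
  | pending
  | included (t : Time)
  | timeout
  deriving DecidableEq

/-- A counter: a natural-number value `n` together with a boolean flag `b`. -/
structure Counter where
  n : ℕ
  b : Bool
  deriving DecidableEq

/-- Operations: simple transfers to implicit accounts, contract invocations
(transfers to a public hash together with a serialized argument), and
contract originations. -/
inductive Op where
  | transferK (nt : Tz) (sender : Puk) (dst : Puk) (fee : Tz)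
  | transferH (nt : Tz) (sender : Puk) (dst : Puh) (arg : String) (fee : Tz)
  | originate (nt : Tz) (sender : Puk) (code : Code) (init : String) (fee : Tz)
  deriving DecidableEq

/-- The sender (public key) of an operation. -/
def Op.sender : Op → Puk
  | .transferK _ s _ _ => s
  | .transferH _ s _ _ _ => s
  | .originate _ s _ _ _ => s

/-- The amount of tokens transferred by an operation. -/
def Op.amount : Op → Tz
  | .transferK nt _ _ _ => nt
  | .transferH nt _ _ _ _ => nt
  | .originate nt _ _ _ _ => nt

/-- The fee of an operation. -/
def Op.opFee : Op → Tz
  | .transferK _ _ _ fee => fee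
  | .transferH _ _ _ _ fee => fee
  | .originate _ _ _ _ fee => fee

/-- A contractor manages a single smart contract: its code, the time it was
accepted, its balance and its storage (a serialized value). -/
structure Contractor where
  code : Code
  time : Time
  bal : Tz
  storage : String

abbrev Pool := Oph → Option (Op × Time × Status)
abbrev Managers := Puk → Option (Tz × Counter)
abbrev Contractors := Puh → Option Contractor

/-- The state of the blockchain: a pool of operations, a map of managers,
a map of contractors, and the current time. -/
structure Blockchain where
  pool : Pool
  mgrs : Managers
  ctrs : Contractors
  time : Time

/-- `updCount M puk b` sets the flag of the counter of the account `puk`. -/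
def updCount (M : Managers) (puk : Puk) (b : Bool) : Managers :=
  Function.update M puk ((M puk).map (fun p => (p.1, ⟨p.2.n, b⟩)))

/-- `updSucc M puk nt fee` deducts amount and fee from the balance of `puk`,
increments its counter value and resets the counter flag. -/
def updSucc (M : Managers) (puk : Puk) (nt fee : Tz) : Managers :=
  Function.update M puk ((M puk).map (fun p => (p.1 - nt - fee, ⟨p.2.n + 1, false⟩)))

/-- `updConstr run C puh nt arg` updates balance and storage of the contract
at `puh` upon an accepted invocation with amount `nt` and argument `arg`;
the new storage is computed by the (unspecified) contract execution
function `run`. -/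
def updConstr (run : Code → String → String → String) (C : Contractors)
    (puh : Puh) (nt : Tz) (arg : String) : Contractors :=
  Function.update C puh
    ((C puh).map (fun c => { c with bal := c.bal + nt, storage := run c.code c.storage arg }))

/-- Transitions of the blockchain state: acceptance of a pending transfer,
acceptance of a pending contract invocation, acceptance of a pending
origination (Block-Originate-Accept), and timeout (Block-Timeout).
`genPuh` is the (unspecified) hash-generation function for contract
addresses and `run` the (unspecified) contract execution function. -/
inductive BStep (genPuh : Code → Time → Puh) (run : Code → String → String → String) :
    Blockchain → Blockchain → Prop where
  | acceptK {P : Pool} {M : Managers} {C : Contractors} {t : Time}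
      {oph : Oph} {nt : Tz} {puk dst : Puk} {fee : Tz} {th : Time}
      (hP : P oph = some (.transferK nt puk dst fee, th, .pending))
      (ht : t - th ≤ 60) :
      BStep genPuh run ⟨P, M, C, t⟩
        ⟨Function.update P oph (some (.transferK nt puk dst fee, th, .included t)),
         updSucc M puk nt fee, C, t + 1⟩
  | acceptH {P : Pool} {M : Managers} {C : Contractors} {t : Time}
      {oph : Oph} {nt : Tz} {puk : Puk} {dst : Puh} {arg : String} {fee : Tz} {th : Time}
      (hP : P oph = some (.transferH nt puk dst arg fee, th, .pending))
      (ht : t - th ≤ 60) :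
      BStep genPuh run ⟨P, M, C, t⟩
        ⟨Function.update P oph (some (.transferH nt puk dst arg fee, th, .included t)),
         updSucc M puk nt fee, updConstr run C dst nt arg, t + 1⟩
  | acceptO {P : Pool} {M : Managers} {C : Contractors} {t : Time}
      {oph : Oph} {nt : Tz} {puk : Puk} {code : Code} {init : String} {fee : Tz} {th : Time}
      (hP : P oph = some (.originate nt puk code init fee, th, .pending))
      (ht : t - th ≤ 60)
      (hfresh : C (genPuh code t) = none) :
      BStep genPuh run ⟨P, M, C, t⟩
        ⟨Function.update P oph (some (.originate nt puk code init fee, th, .included t)),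
         updSucc M puk nt fee,
         Function.update C (genPuh code t) (some ⟨code, t, nt, init⟩), t + 1⟩
  | timeout {P : Pool} {M : Managers} {C : Contractors} {t : Time}
      {oph : Oph} {op : Op} {th : Time}
      (hP : P oph = some (op, th, .pending))
      (ht : 60 < t - th) :
      BStep genPuh run ⟨P, M, C, t⟩
        ⟨Function.update P oph (some (op, th, .timeout)),
         updCount M op.sender false, C, t⟩

/-- Blockchain transitions respect the operation lifecycle:
a pool entry is either unchanged, or goes from pending to timeout, or goes
from pending (within 60 cycles) to included at the current time while the
time stamp is incremented. -/
theorem bstep_lifecycle (genPuh : Code → Time → Puh)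
    (run : Code → String → String → String)
    {P P' : Pool} {M M' : Managers} {C C' : Contractors} {t t' : Time}
    (h : BStep genPuh run ⟨P, M, C, t⟩ ⟨P', M', C', t'⟩)
    {oph : Oph} {op : Op} {th : Time} {s : Status}
    (hP : P oph = some (op, th, s)) :
    P' oph = some (op, th, s) ∨
    (s = Status.pending ∧ P' oph = some (op, th, Status.timeout)) ∨
    (s = Status.pending ∧ t - th ≤ 60 ∧
      P' oph = some (op, th, Status.included t) ∧ t' = t + 1) := by
  cases h with
  | @acceptK _ _ _ _ oph' nt puk dst fee th' hP' ht =>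
    by_cases he : oph = oph'
    · subst he
      rw [hP'] at hP
      obtain ⟨h1, h2, h3⟩ : Op.transferK nt puk dst fee = op ∧ th' = th ∧ Status.pending = s := by
        obtain ⟨a,b,c⟩ := (by simpa using hP); exact ⟨a,b,c⟩
      subst h1 h2 h3
      right; right
      exact ⟨rfl, ht, by simp [Function.update_self], rfl⟩
    · left; rw [Function.update_of_ne he]; exact hP
  | @acceptH _ _ _ _ oph' nt puk dst arg fee th' hP' ht =>
    by_cases he : oph = oph'
    · subst he
      rw [hP'] at hP
      obtain ⟨h1, h2, h3⟩ : Op.transferH nt puk dst arg fee = op ∧ th' = th ∧ Status.pending = s := by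
        obtain ⟨a,b,c⟩ := (by simpa using hP); exact ⟨a,b,c⟩
      subst h1 h2 h3
      right; right
      exact ⟨rfl, ht, by simp [Function.update_self], rfl⟩
    · left; rw [Function.update_of_ne he]; exact hP
  | @acceptO _ _ _ _ oph' nt puk code init fee th' hP' ht hfresh =>
    by_cases he : oph = oph'
    · subst he
      rw [hP'] at hP
      obtain ⟨h1, h2, h3⟩ : Op.originate nt puk code init fee = op ∧ th' = th ∧ Status.pending = s := by
        obtain ⟨a,b,c⟩ := (by simpa using hP); exact ⟨a,b,c⟩
      subst h1 h2 h3
      right; right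
      exact ⟨rfl, ht, by simp [Function.update_self], rfl⟩
    · left; rw [Function.update_of_ne he]; exact hP
  | @timeout _ _ _ _ oph' op' th' hP' ht =>
    by_cases he : oph = oph'
    · subst he
      rw [hP'] at hP
      obtain ⟨h1, h2, h3⟩ : op' = op ∧ th' = th ∧ Status.pending = s := by
        obtain ⟨a,b,c⟩ := (by simpa using hP); exact ⟨a,b,c⟩
      subst h1 h2 h3
      right; left
      exact ⟨rfl, by simp [Function.update_self]⟩
    · left; rw [Function.update_of_ne he]; exact hP
end

section
/- If the blockchain state makes a transition [P, M, C, t] ⇒ [P', M', C', t'], then the domain of the manager map M is contained in the domain of M'. -/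
set_option autoImplicit false

/-- A blockchain transition never removes managers:
`dom M ⊆ dom M'`. -/
theorem bstep_mgr_dom_mono (genPuh : Code → Time → Puh)
    (run : Code → String → String → String)
    {P P' : Pool} {M M' : Managers} {C C' : Contractors} {t t' : Time}
    (h : BStep genPuh run ⟨P, M, C, t⟩ ⟨P', M', C', t'⟩) :
    ∀ puk : Puk, (M puk).isSome → (M' puk).isSome := by
  intro puk hs
  cases h <;>
    simp only [updSucc, updCount, Function.update] <;>
    split <;> simp_all [Option.isSome_map]
end

section
/- If the blockchain state makes a transition [P, M, C, t] ⇒ [P', M', C', t'], then the domain of the contractor map C is contained in the domain of C', and moreover for every public hash puh in the domain of C, the code component of C(puh) equals the code component of C'(puh). -/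
set_option autoImplicit false

/-- Blockchain transitions never remove contractors and
never change the code of a contractor. -/
theorem bstep_ctr_dom_code (genPuh : Code → Time → Puh)
    (run : Code → String → String → String)
    {P P' : Pool} {M M' : Managers} {C C' : Contractors} {t t' : Time}
    (h : BStep genPuh run ⟨P, M, C, t⟩ ⟨P', M', C', t'⟩) :
    (∀ puh : Puh, (C puh).isSome → (C' puh).isSome) ∧
    (∀ (puh : Puh) (c : Contractor), C puh = some c →
      ∃ c' : Contractor, C' puh = some c' ∧ c.code = c'.code) := by
  cases h with
  | acceptK hP ht => exact ⟨fun puh h => h, fun puh c hc => ⟨c, hc, rfl⟩⟩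
  | acceptH hP ht =>
    rename_i oph nt puk dst arg fee th
    constructor
    · intro puh h
      unfold updConstr
      rcases eq_or_ne puh dst with rfl | hne
      · simp [Function.update_self, Option.isSome_map]; exact h
      · simpa [Function.update_of_ne hne] using h
    · intro puh c hc
      unfold updConstr
      rcases eq_or_ne puh dst with rfl | hne
      · exact ⟨{ c with bal := c.bal + nt, storage := run c.code c.storage arg }, by simp [updConstr, Function.update_self, hc], rfl⟩
      · exact ⟨c, by simp [Function.update_of_ne hne, hc], rfl⟩
  | acceptO hP ht hfresh =>
    rename_i oph nt puk code init fee th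
    constructor
    · intro puh h
      rcases eq_or_ne puh (genPuh code t) with rfl | hne
      · simp [Function.update_self]
      · simpa [Function.update_of_ne hne] using h
    · intro puh c hc
      rcases eq_or_ne puh (genPuh code t) with rfl | hne
      · rw [hfresh] at hc; exact absurd hc (by simp)
      · exact ⟨c, by simp [Function.update_of_ne hne, hc], rfl⟩
  | timeout hP ht => exact ⟨fun puh h => h, fun puh c hc => ⟨c, hc, rfl⟩⟩
end

section
/- Blockchain transitions preserve the contractor invariant: if [P, M, C, t] ⇒ [P', M', C', t'] and for every puh in the domain of C with C(puh) = (code, t̃, bal, storage) one has puh = genPuh(code, t̃), then for every puh in the domain of C' with C'(puh) = (code, t̃, bal, storage) one has puh = genPuh(code, t̃). -/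
set_option autoImplicit false

/-- Blockchain transitions preserve the contractor
invariant: every contractor's public hash is generated from its code and
acceptance time by `genPuh`. -/
theorem bstep_ctr_hash_invariant (genPuh : Code → Time → Puh)
    (run : Code → String → String → String)
    {P P' : Pool} {M M' : Managers} {C C' : Contractors} {t t' : Time}
    (h : BStep genPuh run ⟨P, M, C, t⟩ ⟨P', M', C', t'⟩)
    (hinv : ∀ (puh : Puh) (c : Contractor), C puh = some c →
      puh = genPuh c.code c.time) :
    ∀ (puh : Puh) (c : Contractor), C' puh = some c →
      puh = genPuh c.code c.time := by
  cases h with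
  | acceptK hP ht => exact hinv
  | acceptH hP ht =>
      rename_i dst _ _
      intro puh c hc
      unfold updConstr at hc
      rw [Function.update_apply] at hc
      split_ifs at hc with he
      · subst he
        cases h0 : C puh with
        | none => rw [h0] at hc; simp at hc
        | some c0 =>
          rw [h0] at hc
          simp only [Option.map_some] at hc
          cases hc
          exact hinv puh c0 h0
      · exact hinv puh c hc
  | acceptO hP ht hfresh =>
      rename_i code _ _ _
      intro puh c hc
      rw [Function.update_apply] at hc
      split_ifs at hc with he
      · cases hc; exact he
      · exact hinv puh c hc
  | timeout hP ht => exact hinv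
end
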